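/- arXiv:2101.07510 — 3 statements merged into one kernel-verified Lean document; each statement's English description precedes it below -/
import Mathlib

section
/- Let δ ∈ V∨ be dominant and let ν₁, ν₂ ∈ V∨ be Hodge–Newton indecomposable with respect to δ, with ν₁ − ν₂ lying in the ℚ-span of the coroots. Suppose ν' ∈ V∨ is a least upper bound of {ν₁, ν₂} in the set of dominant elements of V∨ partially ordered by ≤. Then ν' ≤ δ and ν' is Hodge–Newton indecomposable with respect to δ. (Combinatorial content of Lemma 7.6 of the paper: the join of two Hodge–Newton indecomposable classes is Hodge–Newton indecomposable.) -/
open Module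

/-- Data of a reduced crystallographic root system `Φ` spanning a finite-dimensional
`ℚ`-vector space `V`, with a fixed base `Δ` of simple roots, set of positive roots
`pos`, coroots `coroot α` in the dual space `V∨`, and Weyl group `W` (generated by the
reflections in the roots). The pairing `⟨x, f⟩` of `x ∈ V` with `f ∈ V∨` is `f x`. -/
structure RootSystemData (V : Type) [AddCommGroup V] [Module ℚ V] [FiniteDimensional ℚ V] where
  /-- the (finite) set of roots -/
  Φ : Finset V
  /-- the base of simple roots -/
  Δ : Finset V
  /-- the set of positive roots -/
  pos : Finset V
  /-- the coroot `α∨ ∈ V∨` associated with a root `α` -/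
  coroot : V → Module.Dual ℚ V
  /-- the Weyl group, as a group of linear automorphisms of `V` -/
  W : Subgroup (V ≃ₗ[ℚ] V)
  span_Φ : Submodule.span ℚ (Φ : Set V) = ⊤
  zero_notin : (0:V) ∉ Φ
  Δ_sub : Δ ⊆ Φ
  Δ_indep : LinearIndependent ℚ (Subtype.val : {x // x ∈ Δ} → V)
  pos_sub : pos ⊆ Φ
  mem_pos_iff : ∀ β ∈ Φ, (β ∈ pos ↔ ∃ c : V → ℚ, (∀ α, 0 ≤ c α) ∧ β = ∑ α ∈ Δ, c α • α)
  pos_or_neg : ∀ β ∈ Φ, β ∈ pos ∨ -β ∈ pos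
  coroot_self : ∀ α, α ∈ Φ → coroot α α = 2
  crystallographic : ∀ α ∈ Φ, ∀ β ∈ Φ, ∃ n : ℤ, coroot α β = (n:ℚ)
  reduced : ∀ α ∈ Φ, ∀ c : ℚ, c • α ∈ Φ → c = 1 ∨ c = -1
  reflect_root : ∀ α ∈ Φ, ∀ β ∈ Φ, β - coroot α β • α ∈ Φ
  reflect_coroot : ∀ α ∈ Φ, ∀ β ∈ Φ, ∀ x : V,
    coroot (β - coroot α β • α) x = coroot β (x - coroot α x • α)
  weyl_gen : W = Subgroup.closure
    { w : V ≃ₗ[ℚ] V | ∃ α, ∃ hα : α ∈ Φ, w = Module.reflection (coroot_self α hα) }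

namespace RootSystemData

variable {V : Type} [AddCommGroup V] [Module ℚ V] [FiniteDimensional ℚ V] (R : RootSystemData V)

/-- The (contragredient) action of a linear automorphism `w` of `V` on the dual space `V∨`:
`⟨x, w(ν)⟩ = ⟨w⁻¹(x), ν⟩`, so that `⟨w(x), w(ν)⟩ = ⟨x, ν⟩`. -/
noncomputable def dAct (w : V ≃ₗ[ℚ] V) (ν : Module.Dual ℚ V) : Module.Dual ℚ V :=
  ν.comp (w.symm : V →ₗ[ℚ] V)

/-- `ν ∈ V∨` is dominant if `⟨α, ν⟩ ≥ 0` for all simple roots `α ∈ Δ`. -/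
def IsDominant (ν : Module.Dual ℚ V) : Prop := ∀ α ∈ R.Δ, 0 ≤ ν α

/-- `ν ≤ ν'` iff `ν' − ν` is a non-negative rational linear combination of the positive
coroots `{β∨ : β ∈ Φ⁺}`. -/
def le (ν ν' : Module.Dual ℚ V) : Prop :=
  ∃ c : V → ℚ, (∀ β, 0 ≤ c β) ∧ ν' - ν = ∑ β ∈ R.pos, c β • R.coroot β

end RootSystemData

namespace RootSystemData

variable {V : Type} [AddCommGroup V] [Module ℚ V] [FiniteDimensional ℚ V] (R : RootSystemData V)

/-- The Hodge–Newton decomposability condition for `ν` with respect to `δ`: there is a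
proper subset `Δ' ⊊ Δ` containing `{α ∈ Δ : ⟨α, ν⟩ = 0}` such that `δ − ν` lies in the
`ℚ`-span of `{α∨ : α ∈ Δ'}`. -/
def HNCond (δ ν : Module.Dual ℚ V) : Prop :=
  ∃ Δ' : Finset V, Δ' ⊆ R.Δ ∧ Δ' ≠ R.Δ ∧ (∀ α ∈ R.Δ, ν α = 0 → α ∈ Δ') ∧
    δ - ν ∈ Submodule.span ℚ (R.coroot '' (Δ' : Set V))

/-- `ν` is Hodge–Newton indecomposable with respect to a dominant `δ`: `ν` is dominant,
`ν ≤ δ`, and the Hodge–Newton decomposability condition fails. -/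
def HNIndecomposable (δ ν : Module.Dual ℚ V) : Prop :=
  R.IsDominant ν ∧ R.le ν δ ∧ ¬ R.HNCond δ ν

end RootSystemData

/-!
Since `δ` is a dominant upper bound of `ν₁` and `ν₂`, the join satisfies `ν' ≤ δ`. Suppose `ν'`
were Hodge–Newton decomposable via `Δ' ⊊ Δ` and pick `α ∈ Δ ∖ Δ'`, so that `⟨α, ν'⟩ > 0`. Each
difference `ν' - νᵢ` is a non-negative combination of simple coroots. If its `α∨`-coefficient
vanished, then `⟨α, νᵢ⟩ ≥ ⟨α, ν'⟩ > 0` (simple roots pair non-positively with other simple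
coroots) and `Δ ∖ {α}` would decompose `νᵢ`. So both coefficients are positive, and `ν' - t α∨`
is, for small `t > 0`, still a dominant upper bound of `ν₁` and `ν₂`, although it lies strictly
below `ν'` (pair with `Σ_{β > 0} β`, on which every simple coroot takes the value `2`).

That positive coroots are non-negative combinations of simple coroots follows by induction on the
height, reflecting a positive root `β` in a simple root `α` with `⟨α, β∨⟩ > 0`; this needs
`⟨β, α∨⟩ > 0` as well, which holds because otherwise the rotation `s_β s_α` would produce
infinitely many roots.
-/

lemma apply_nonneg_of_mem_hull {V : Type} [AddCommGroup V] [Module ℚ V] {s : Set (Dual ℚ V)}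
    {x : V} (hs : ∀ μ ∈ s, 0 ≤ μ x) {μ : Dual ℚ V} (hμ : μ ∈ PointedCone.hull ℚ s) : 0 ≤ μ x := by
  have hx : x ∈ PointedCone.dual LinearMap.id (PointedCone.hull ℚ s : Set (Dual ℚ V)) := by
    rw [PointedCone.dual_hull]
    exact hs
  exact hx hμ

/-- Coordinates `(p, q)` of `(s_γ s_α)ⁿ α = p • α + q • γ` for roots with
`⟨γ, α∨⟩ = ⟨α, γ∨⟩ = m`. -/
def dihedralCoeffs (m : ℚ) : ℕ → ℚ × ℚ
  | 0 => (1, 0)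
  | n + 1 => (-(dihedralCoeffs m n).1 - m * (dihedralCoeffs m n).2,
      m * (dihedralCoeffs m n).1 + (m * m - 1) * (dihedralCoeffs m n).2)

lemma dihedralCoeffs_snd_strictMono {m : ℚ} (hm : 2 ≤ m) :
    StrictMono fun n => (dihedralCoeffs m n).2 := by
  have key : ∀ n, 0 ≤ (dihedralCoeffs m n).2 ∧
      (dihedralCoeffs m n).2 + m ≤ (dihedralCoeffs m (n + 1)).2 := by
    intro n
    induction n with
    | zero => simp [dihedralCoeffs]
    | succ n ih =>
      have hrec : (dihedralCoeffs m (n + 2)).2 =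
          (m * m - 2) * (dihedralCoeffs m (n + 1)).2 - (dihedralCoeffs m n).2 := by
        simp only [dihedralCoeffs]
        ring
      have hgrowth : 0 ≤ (m * m - 4) * (dihedralCoeffs m (n + 1)).2 :=
        mul_nonneg (by nlinarith) (by linarith)
      exact ⟨by linarith, by rw [hrec]; linarith⟩
  exact strictMono_nat_of_lt_succ fun n => by linarith [(key n).2]

namespace RootSystemData

variable {V : Type} [AddCommGroup V] [Module ℚ V] [FiniteDimensional ℚ V] (R : RootSystemData V)

lemma coroot_reflect {α β : V} (hα : α ∈ R.Φ) (hβ : β ∈ R.Φ) :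
    R.coroot (β - R.coroot α β • α) = R.coroot β - R.coroot β α • R.coroot α := by
  ext x
  simp [R.reflect_coroot α hα β hβ x, mul_comm]

lemma coroot_neg {α : V} (hα : α ∈ R.Φ) : R.coroot (-α) = -R.coroot α := by
  have h := R.coroot_reflect hα hα
  rw [R.coroot_self α hα] at h
  rwa [show α - (2 : ℚ) • α = -α by module,
    show R.coroot α - (2 : ℚ) • R.coroot α = -R.coroot α by module] at h

lemma span_Δ : Submodule.span ℚ (R.Δ : Set V) = ⊤ := by
  have hpos : ∀ β ∈ R.pos, β ∈ Submodule.span ℚ (R.Δ : Set V) := fun β hβ => by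
    obtain ⟨c, -, rfl⟩ := (R.mem_pos_iff β (R.pos_sub hβ)).1 hβ
    exact Submodule.sum_mem _ fun α hα => Submodule.smul_mem _ _ (Submodule.subset_span hα)
  refine eq_top_iff.2 (R.span_Φ ▸ Submodule.span_le.2 fun β hβ => ?_)
  rcases R.pos_or_neg β hβ with h | h
  · exact hpos β h
  · simpa using Submodule.neg_mem _ (hpos _ h)

noncomputable def simpleBasis : Basis R.Δ ℚ V :=
  Basis.mk R.Δ_indep (by simp [R.span_Δ])

@[simp] lemma simpleBasis_apply (α : R.Δ) : R.simpleBasis α = α := Basis.mk_apply _ _ _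

lemma simpleBasis_coord_self {α : V} (hα : α ∈ R.Δ) : R.simpleBasis.coord ⟨α, hα⟩ α = 1 := by
  have h := R.simpleBasis.repr_self ⟨α, hα⟩
  rw [simpleBasis_apply] at h
  rw [Basis.coord_apply, h, Finsupp.single_eq_same]

lemma simpleBasis_coord_of_ne {α γ : V} (hα : α ∈ R.Δ) (hγ : γ ∈ R.Δ) (hne : γ ≠ α) :
    R.simpleBasis.coord ⟨α, hα⟩ γ = 0 := by
  have h := R.simpleBasis.repr_self ⟨γ, hγ⟩
  rw [simpleBasis_apply] at h
  rw [Basis.coord_apply, h, Finsupp.single_eq_of_ne (by simpa [Subtype.ext_iff] using hne.symm)]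

lemma simpleBasis_coord_nonneg_of_mem_pos {α β : V} (hα : α ∈ R.Δ) (hβ : β ∈ R.pos) :
    0 ≤ R.simpleBasis.coord ⟨α, hα⟩ β := by
  obtain ⟨c, hc, rfl⟩ := (R.mem_pos_iff β (R.pos_sub hβ)).1 hβ
  rw [map_sum, Finset.sum_eq_single α (fun γ hγ hne => by
    rw [map_smul, R.simpleBasis_coord_of_ne hα hγ hne, smul_zero]) (absurd hα), map_smul,
    R.simpleBasis_coord_self hα, smul_eq_mul, mul_one]
  exact hc α

lemma mem_pos_of_simpleBasis_coord_pos {α β : V} (hα : α ∈ R.Δ) (hβ : β ∈ R.Φ)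
    (h : 0 < R.simpleBasis.coord ⟨α, hα⟩ β) : β ∈ R.pos :=
  (R.pos_or_neg β hβ).resolve_right fun hneg => by
    have := R.simpleBasis_coord_nonneg_of_mem_pos hα hneg
    rw [map_neg] at this
    linarith

lemma Δ_subset_pos : R.Δ ⊆ R.pos := fun α hα =>
  R.mem_pos_of_simpleBasis_coord_pos hα (R.Δ_sub hα) (by
    rw [R.simpleBasis_coord_self hα]
    exact one_pos)

lemma coroot_apply_nonpos_of_ne {α γ : V} (hα : α ∈ R.Δ) (hγ : γ ∈ R.Δ) (hne : γ ≠ α) :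
    R.coroot α γ ≤ 0 := by
  have hpos : γ - R.coroot α γ • α ∈ R.pos :=
    R.mem_pos_of_simpleBasis_coord_pos hγ (R.reflect_root α (R.Δ_sub hα) γ (R.Δ_sub hγ))
      (by
        rw [map_sub, map_smul, R.simpleBasis_coord_self hγ,
          R.simpleBasis_coord_of_ne hγ hα (Ne.symm hne)]
        simp)
  have h := R.simpleBasis_coord_nonneg_of_mem_pos hα hpos
  rw [map_sub, map_smul, R.simpleBasis_coord_self hα, R.simpleBasis_coord_of_ne hα hγ hne] at h
  simpa using h

lemma reflect_mem_pos_erase [DecidableEq V] {α β : V} (hα : α ∈ R.Δ) (hβ : β ∈ R.pos.erase α) :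
    β - R.coroot α β • α ∈ R.pos.erase α := by
  obtain ⟨hne, hβ⟩ := Finset.mem_erase.1 hβ
  obtain ⟨γ, hγ, hγα, hβγ⟩ : ∃ γ, ∃ hγ : γ ∈ R.Δ, γ ≠ α ∧ 0 < R.simpleBasis.coord ⟨γ, hγ⟩ β := by
    by_contra! h
    have hβα : β = R.simpleBasis.coord ⟨α, hα⟩ β • α := by
      conv_lhs => rw [← R.simpleBasis.sum_repr β]
      rw [Fintype.sum_eq_single ⟨α, hα⟩ fun γ hγ => ?_]
      · simp
      · have := le_antisymm (h γ γ.2 fun h' => hγ (Subtype.ext h'))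
          (R.simpleBasis_coord_nonneg_of_mem_pos γ.2 hβ)
        simp [← Basis.coord_apply, this]
    rcases R.reduced α (R.Δ_sub hα) _ (hβα ▸ R.pos_sub hβ) with h1 | h1
    · exact hne (by rw [hβα, h1, one_smul])
    · linarith [R.simpleBasis_coord_nonneg_of_mem_pos hα hβ]
  have hcoord : R.simpleBasis.coord ⟨γ, hγ⟩ (β - R.coroot α β • α) =
      R.simpleBasis.coord ⟨γ, hγ⟩ β := by
    rw [map_sub, map_smul, R.simpleBasis_coord_of_ne hγ hα (Ne.symm hγα), smul_zero, sub_zero]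
  refine Finset.mem_erase.2 ⟨fun h => ?_, R.mem_pos_of_simpleBasis_coord_pos hγ
    (R.reflect_root α (R.Δ_sub hα) β (R.pos_sub hβ)) (hcoord ▸ hβγ)⟩
  rw [h, R.simpleBasis_coord_of_ne hγ hα (Ne.symm hγα)] at hcoord
  linarith

lemma coroot_apply_sum_pos {γ : V} (hγ : γ ∈ R.Δ) : R.coroot γ (∑ β ∈ R.pos, β) = 2 := by
  classical
  have hγΦ := R.Δ_sub hγ
  have hinv : ∀ β, (β - R.coroot γ β • γ) - R.coroot γ (β - R.coroot γ β • γ) • γ = β := by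
    intro β
    simp only [map_sub, map_smul, smul_eq_mul, R.coroot_self γ hγΦ]
    module
  -- the reflection in `γ` permutes the other positive roots and negates their pairing with `γ∨`
  have hswap : ∑ β ∈ R.pos.erase γ, R.coroot γ β = -∑ β ∈ R.pos.erase γ, R.coroot γ β := by
    rw [← Finset.sum_neg_distrib]
    refine Finset.sum_nbij' (fun β => β - R.coroot γ β • γ) (fun β => β - R.coroot γ β • γ)
      (fun β hβ => R.reflect_mem_pos_erase hγ hβ) (fun β hβ => R.reflect_mem_pos_erase hγ hβ)
      (fun β _ => hinv β) (fun β _ => hinv β) fun β _ => ?_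
    simp [R.coroot_self γ hγΦ]
    ring
  rw [← Finset.add_sum_erase _ _ (R.Δ_subset_pos hγ), map_add, R.coroot_self γ hγΦ, map_sum]
  linarith

lemma exists_eq_smul_of_coroot_apply_eq {α γ : V} (hα : α ∈ R.Φ) (hγ : γ ∈ R.Φ) {m : ℚ}
    (hm : 2 ≤ m) (hαγ : R.coroot α γ = m) (hγα : R.coroot γ α = m) : ∃ k : ℚ, γ = k • α := by
  by_contra hind
  set p : ℕ → ℚ := fun n => (dihedralCoeffs m n).1
  set q : ℕ → ℚ := fun n => (dihedralCoeffs m n).2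
  have hroot : ∀ n, p n • α + q n • γ ∈ R.Φ := by
    intro n
    induction n with
    | zero => simpa [p, q, dihedralCoeffs] using hα
    | succ n ih =>
      convert R.reflect_root γ hγ _ (R.reflect_root α hα _ ih) using 1
      simp only [p, q, dihedralCoeffs, map_add, map_sub, map_smul, smul_eq_mul, hαγ, hγα,
        R.coroot_self α hα, R.coroot_self γ hγ]
      module
  have hinj : Function.Injective fun n => p n • α + q n • γ := by
    intro i j hij
    by_contra hne
    wlog hlt : i < j generalizing i j
    · exact this hij.symm (Ne.symm hne) (lt_of_le_of_ne (not_lt.1 hlt) (Ne.symm hne))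
    have hq : q j - q i ≠ 0 := sub_ne_zero.2 (dihedralCoeffs_snd_strictMono hm hlt).ne'
    refine hind ⟨(q j - q i)⁻¹ * (p i - p j), ?_⟩
    rw [mul_smul, eq_inv_smul_iff₀ hq, sub_smul, sub_smul, sub_eq_sub_iff_add_eq_add]
    simp only at hij
    rw [hij]
    abel
  exact (Set.infinite_range_of_injective hinj).mono (Set.range_subset_iff.2 hroot)
    R.Φ.finite_toSet

lemma coroot_apply_pos_of_coroot_apply_pos {α β : V} (hα : α ∈ R.Φ) (hβ : β ∈ R.Φ)
    (h : 0 < R.coroot β α) : 0 < R.coroot α β := by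
  by_contra! hb
  -- `s_β α` and `α` pair symmetrically, with pairing at least `2`
  have hm : 2 ≤ 2 - R.coroot β α * R.coroot α β := by nlinarith
  obtain ⟨k, hk⟩ := R.exists_eq_smul_of_coroot_apply_eq hα (R.reflect_root β hβ α hα) hm
    (by simp [R.coroot_self α hα, mul_comm])
    (by simp [R.coroot_reflect hβ hα, R.coroot_self α hα, mul_comm])
  have hβα : β = ((1 - k) / R.coroot β α) • α := by
    rw [div_eq_inv_mul, mul_smul, eq_inv_smul_iff₀ h.ne', sub_smul, one_smul, ← hk]
    abel
  rcases R.reduced α hα _ (hβα ▸ hβ) with h1 | h1 <;> rw [h1] at hβα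
  · rw [hβα, one_smul, R.coroot_self α hα] at hb
    norm_num at hb
  · rw [hβα, neg_one_smul, R.coroot_neg hα, LinearMap.neg_apply, R.coroot_self α hα] at h
    norm_num at h

lemma exists_coroot_apply_simple_pos {β : V} (hβ : β ∈ R.pos) : ∃ α ∈ R.Δ, 0 < R.coroot β α := by
  by_contra! h
  have hsum := congrArg (R.coroot β) (R.simpleBasis.sum_repr β)
  rw [map_sum, R.coroot_self β (R.pos_sub hβ)] at hsum
  have : ∑ α : R.Δ, R.coroot β (R.simpleBasis.repr β α • R.simpleBasis α) ≤ 0 :=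
    Finset.sum_nonpos fun α _ => by
      rw [map_smul, smul_eq_mul, simpleBasis_apply]
      exact mul_nonpos_of_nonneg_of_nonpos (R.simpleBasis_coord_nonneg_of_mem_pos α.2 hβ) (h α α.2)
  linarith

abbrev corootCone (s : Set V) : PointedCone ℚ (Dual ℚ V) := PointedCone.hull ℚ (R.coroot '' s)

lemma coroot_mem_corootCone {β : V} (hβ : β ∈ R.pos) : R.coroot β ∈ R.corootCone R.Δ := by
  classical
  by_contra hβ'
  -- a counterexample of minimal height
  obtain ⟨β, hβ, hmin⟩ := (R.pos.filter fun β => R.coroot β ∉ R.corootCone R.Δ).exists_min_image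
    R.simpleBasis.sumCoords ⟨β, Finset.mem_filter.2 ⟨hβ, hβ'⟩⟩
  obtain ⟨hβ, hβ'⟩ := Finset.mem_filter.1 hβ
  obtain ⟨α, hα, hβα⟩ := R.exists_coroot_apply_simple_pos hβ
  have hαβ := R.coroot_apply_pos_of_coroot_apply_pos (R.Δ_sub hα) (R.pos_sub hβ) hβα
  have hne : β ≠ α := fun h => hβ' (Submodule.subset_span ⟨β, h ▸ hα, rfl⟩)
  have hrefl :=
    Finset.mem_of_mem_erase (R.reflect_mem_pos_erase hα (Finset.mem_erase.2 ⟨hne, hβ⟩))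
  have hlt : R.simpleBasis.sumCoords (β - R.coroot α β • α) < R.simpleBasis.sumCoords β := by
    have hα1 : R.simpleBasis.sumCoords α = 1 := by
      simpa using R.simpleBasis.sumCoords_self_apply (i := ⟨α, hα⟩)
    rw [map_sub, map_smul, hα1, smul_eq_mul, mul_one]
    linarith
  have hmem : R.coroot (β - R.coroot α β • α) ∈ R.corootCone R.Δ := by
    by_contra h
    exact (hmin _ (Finset.mem_filter.2 ⟨hrefl, h⟩)).not_gt hlt
  refine hβ' ?_
  rw [← sub_add_cancel (R.coroot β) (R.coroot β α • R.coroot α),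
    ← R.coroot_reflect (R.Δ_sub hα) (R.pos_sub hβ)]
  exact add_mem hmem (PointedCone.smul_mem _ hβα.le (Submodule.subset_span ⟨α, hα, rfl⟩))

lemma le_iff_sub_mem_corootCone {ν ν' : Dual ℚ V} : R.le ν ν' ↔ ν' - ν ∈ R.corootCone R.Δ := by
  classical
  refine ⟨fun ⟨c, hc, h⟩ => h ▸ Submodule.sum_mem _ fun β hβ =>
    PointedCone.smul_mem _ (hc β) (R.coroot_mem_corootCone hβ), fun h => ?_⟩
  unfold le
  generalize ν' - ν = μ at h ⊢
  induction h using Submodule.span_induction with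
  | mem _ hμ =>
    obtain ⟨γ, hγ, rfl⟩ := hμ
    refine ⟨fun β => if β = γ then 1 else 0, fun _ => ite_nonneg zero_le_one le_rfl, ?_⟩
    simp [ite_smul, R.Δ_subset_pos hγ]
  | zero => exact ⟨0, fun _ => le_rfl, by simp⟩
  | add _ _ _ _ h₁ h₂ =>
    obtain ⟨c₁, hc₁, rfl⟩ := h₁
    obtain ⟨c₂, hc₂, rfl⟩ := h₂
    exact ⟨c₁ + c₂, fun β => add_nonneg (hc₁ β) (hc₂ β),
      by simp [add_smul, Finset.sum_add_distrib]⟩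
  | smul r _ _ h =>
    obtain ⟨c, hc, rfl⟩ := h
    exact ⟨(r : ℚ) • c, fun β => mul_nonneg r.2 (hc β),
      by simp [Finset.smul_sum, smul_smul, ← Nonneg.coe_smul]⟩

variable {R} in
lemma le.trans {ν₁ ν₂ ν₃ : Dual ℚ V} (h₁₂ : R.le ν₁ ν₂) (h₂₃ : R.le ν₂ ν₃) : R.le ν₁ ν₃ := by
  rw [le_iff_sub_mem_corootCone] at *
  simpa using add_mem h₂₃ h₁₂

lemma le_sub_smul_coroot_of_le {α : V} (hα : α ∈ R.Δ) (ν : Dual ℚ V) {s t : ℚ} (hst : s ≤ t) :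
    R.le (ν - t • R.coroot α) (ν - s • R.coroot α) := by
  rw [le_iff_sub_mem_corootCone, show ν - s • R.coroot α - (ν - t • R.coroot α) =
    (t - s) • R.coroot α by module]
  exact PointedCone.smul_mem _ (sub_nonneg.2 hst) (Submodule.subset_span ⟨α, hα, rfl⟩)

lemma not_le_sub_smul_coroot {α : V} (hα : α ∈ R.Δ) (ν : Dual ℚ V) {t : ℚ} (ht : 0 < t) :
    ¬ R.le ν (ν - t • R.coroot α) := by
  rw [le_iff_sub_mem_corootCone, sub_sub_cancel_left]
  intro h
  have := apply_nonneg_of_mem_hull (x := ∑ β ∈ R.pos, β) (by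
    rintro _ ⟨γ, hγ, rfl⟩
    rw [R.coroot_apply_sum_pos hγ]
    exact zero_le_two) h
  rw [LinearMap.neg_apply, LinearMap.smul_apply, R.coroot_apply_sum_pos hα, smul_eq_mul] at this
  linarith

lemma apply_nonpos_of_mem_corootCone_erase [DecidableEq V] {α : V} (hα : α ∈ R.Δ)
    {μ : Dual ℚ V} (hμ : μ ∈ R.corootCone (R.Δ.erase α)) : μ α ≤ 0 := by
  have := apply_nonneg_of_mem_hull (x := -α) (by
    rintro _ ⟨γ, hγ, rfl⟩
    obtain ⟨hne, hγ⟩ := Finset.mem_erase.1 hγ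
    rw [map_neg, neg_nonneg]
    exact R.coroot_apply_nonpos_of_ne hγ hα (Ne.symm hne)) hμ
  rwa [map_neg, neg_nonneg] at this

lemma isDominant_sub_smul_coroot {ν : Dual ℚ V} (hν : R.IsDominant ν) {α : V} (hα : α ∈ R.Δ)
    {t : ℚ} (ht : 0 ≤ t) (htν : 2 * t ≤ ν α) : R.IsDominant (ν - t • R.coroot α) := by
  intro γ hγ
  rw [LinearMap.sub_apply, LinearMap.smul_apply, smul_eq_mul]
  rcases eq_or_ne γ α with rfl | hne
  · rw [R.coroot_self γ (R.Δ_sub hγ)]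
    linarith
  · nlinarith [hν γ hγ, R.coroot_apply_nonpos_of_ne hα hγ hne]

lemma hnCond_of_sub_mem_corootCone_erase [DecidableEq V] {δ ν ν' : Dual ℚ V} {α : V}
    (hα : α ∈ R.Δ) (hνα : 0 < ν' α)
    (hδ : δ - ν' ∈ Submodule.span ℚ (R.coroot '' ↑(R.Δ.erase α)))
    (hν : ν' - ν ∈ R.corootCone (R.Δ.erase α)) : R.HNCond δ ν := by
  refine ⟨R.Δ.erase α, R.Δ.erase_subset α, fun h => R.Δ.notMem_erase α (by rwa [h]),
    fun γ hγ hνγ => Finset.mem_erase.2 ⟨?_, hγ⟩, ?_⟩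
  · rintro rfl
    have := R.apply_nonpos_of_mem_corootCone_erase hγ hν
    rw [LinearMap.sub_apply, hνγ] at this
    linarith
  · rw [← sub_add_sub_cancel δ ν' ν]
    exact add_mem hδ (PointedCone.hull_le_span ℚ _ hν)

lemma exists_pos_le_sub_smul_coroot [DecidableEq V] {δ ν ν' : Dual ℚ V} {α : V}
    (hν : R.HNIndecomposable δ ν) (hle : R.le ν ν') (hα : α ∈ R.Δ) (hνα : 0 < ν' α)
    (hδ : δ - ν' ∈ Submodule.span ℚ (R.coroot '' ↑(R.Δ.erase α))) :
    ∃ a : ℚ, 0 < a ∧ R.le ν (ν' - a • R.coroot α) := by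
  rw [le_iff_sub_mem_corootCone, corootCone, ← Finset.insert_erase hα, Finset.coe_insert,
    Set.image_insert_eq, Submodule.mem_span_insert] at hle
  obtain ⟨a, z, hz, hνz⟩ := hle
  rcases a.2.eq_or_lt with ha | ha
  · refine absurd (R.hnCond_of_sub_mem_corootCone_erase hα hνα hδ ?_) hν.2.2
    rwa [hνz, ← Nonneg.coe_smul, ← ha, zero_smul, zero_add]
  · refine ⟨a, ha, ?_⟩
    rw [le_iff_sub_mem_corootCone, sub_right_comm, hνz, Nonneg.coe_smul, add_sub_cancel_left]
    exact Submodule.span_mono (Set.image_mono (Finset.coe_subset.2 (R.Δ.erase_subset α))) hz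

end RootSystemData

theorem join_hodgeNewton_indecomposable_general {V : Type} [AddCommGroup V] [Module ℚ V]
    [FiniteDimensional ℚ V] (R : RootSystemData V)
    (δ : Module.Dual ℚ V) (hδ : R.IsDominant δ)
    (ν₁ ν₂ : Module.Dual ℚ V)
    (h1 : R.HNIndecomposable δ ν₁) (h2 : R.HNIndecomposable δ ν₂)
    (ν' : Module.Dual ℚ V) (hdom : R.IsDominant ν')
    (hub1 : R.le ν₁ ν') (hub2 : R.le ν₂ ν')
    (hlub : ∀ ν'' : Module.Dual ℚ V, R.IsDominant ν'' → R.le ν₁ ν'' → R.le ν₂ ν'' →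
      R.le ν' ν'') :
    R.le ν' δ ∧ R.HNIndecomposable δ ν' := by
  classical
  have hle : R.le ν' δ := hlub δ hδ h1.2.1 h2.2.1
  refine ⟨hle, hdom, hle, ?_⟩
  rintro ⟨Δ', hsub, hne, hzero, hspan⟩
  obtain ⟨α, hα, hαΔ'⟩ := Finset.exists_of_ssubset (hsub.ssubset_of_ne hne)
  have hνα : 0 < ν' α := (hdom α hα).lt_of_ne fun h => hαΔ' (hzero α hα h.symm)
  have hδ : δ - ν' ∈ Submodule.span ℚ (R.coroot '' ↑(R.Δ.erase α)) :=
    Submodule.span_mono (Set.image_mono fun γ hγ =>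
      Finset.mem_erase.2 ⟨by rintro rfl; exact hαΔ' hγ, hsub hγ⟩) hspan
  obtain ⟨a₁, ha₁, hle₁⟩ := R.exists_pos_le_sub_smul_coroot h1 hub1 hα hνα hδ
  obtain ⟨a₂, ha₂, hle₂⟩ := R.exists_pos_le_sub_smul_coroot h2 hub2 hα hνα hδ
  set t := min (min a₁ a₂) (ν' α / 2)
  have ht : 0 < t := lt_min (lt_min ha₁ ha₂) (half_pos hνα)
  have hdom' := R.isDominant_sub_smul_coroot hdom hα ht.le
    (by linarith [min_le_right (min a₁ a₂) (ν' α / 2)])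
  exact R.not_le_sub_smul_coroot hα ν' ht (hlub _ hdom'
    (hle₁.trans (R.le_sub_smul_coroot_of_le hα ν' ((min_le_left _ _).trans (min_le_left _ _))))
    (hle₂.trans (R.le_sub_smul_coroot_of_le hα ν' ((min_le_left _ _).trans (min_le_right _ _)))))

/-- Lemma 7.6: let `δ` be dominant, let `ν₁, ν₂` be Hodge–Newton indecomposable with
respect to `δ` with `ν₁ − ν₂` in the `ℚ`-span of the coroots, and let `ν'` be a least
upper bound of `{ν₁, ν₂}` among dominant elements with respect to `≤`. Then `ν' ≤ δ` and
`ν'` is Hodge–Newton indecomposable with respect to `δ`. -/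
theorem join_hodgeNewton_indecomposable {V : Type} [AddCommGroup V] [Module ℚ V]
    [FiniteDimensional ℚ V] (R : RootSystemData V)
    (δ : Module.Dual ℚ V) (hδ : R.IsDominant δ)
    (ν₁ ν₂ : Module.Dual ℚ V)
    (h1 : R.HNIndecomposable δ ν₁) (h2 : R.HNIndecomposable δ ν₂)
    (hdiff : ν₁ - ν₂ ∈ Submodule.span ℚ (R.coroot '' (R.Φ : Set V)))
    (ν' : Module.Dual ℚ V) (hdom : R.IsDominant ν')
    (hub1 : R.le ν₁ ν') (hub2 : R.le ν₂ ν')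
    (hlub : ∀ ν'' : Module.Dual ℚ V, R.IsDominant ν'' → R.le ν₁ ν'' → R.le ν₂ ν'' →
      R.le ν' ν'') :
    R.le ν' δ ∧ R.HNIndecomposable δ ν' :=
  join_hodgeNewton_indecomposable_general R δ hδ ν₁ ν₂ h1 h2 ν' hdom hub1 hub2 hlub
end

section
/- Let Δ_M ⊆ Δ and let ρ ∈ V be half the sum of the positive roots. Let ν, λ ∈ V∨ be such that λ − ν is a non-negative rational linear combination of {α∨ : α ∈ Δ_M}. Let w ∈ W be such that w(α∨) is a positive coroot for every α ∈ Δ_M, and such that w(ν) is dominant. Then ⟨ρ, λ − ν⟩ ≤ ⟨ρ, λ_dom − w(ν)⟩, where λ_dom denotes the unique dominant element in the Weyl group orbit of λ. (Inequality chain established at the end of the proof of Theorem 7.13 of the paper.) -/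
open Module

/-!
Pairing `λ − ν = ∑ c_α α∨` with `w⁻¹ρ` instead of `ρ` can only increase it: `⟨ρ, α∨⟩ = 1` for
simple `α`, whereas `⟨w⁻¹ρ, α∨⟩ = ⟨ρ, w(α∨)⟩ ≥ 1` because `w(α∨)` is a positive coroot. Hence
`⟨ρ, λ − ν⟩ ≤ ⟨w⁻¹ρ, λ⟩ − ⟨ρ, w(ν)⟩`. Writing `λ_dom = u(λ)`, we have
`⟨w⁻¹ρ, λ⟩ = ⟨uw⁻¹ρ, λ_dom⟩ ≤ ⟨ρ, λ_dom⟩`, since a dominant element of `V∨` pairs maximally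
with `ρ` on its Weyl orbit: a Weyl group element sends the positive roots injectively to roots
`±β` with `β` positive.
-/

open scoped Pointwise

namespace RootSystemData

@[simp]
theorem dAct_apply {V : Type} [AddCommGroup V] [Module ℚ V]
    (w : V ≃ₗ[ℚ] V) (ν : Module.Dual ℚ V) (x : V) : dAct w ν x = ν (w.symm x) :=
  rfl

variable {V : Type} [AddCommGroup V] [Module ℚ V] [FiniteDimensional ℚ V] (R : RootSystemData V)

theorem coeff_eq_of_sum_smul_eq {f g : V → ℚ}
    (h : ∑ γ ∈ R.Δ, f γ • γ = ∑ γ ∈ R.Δ, g γ • γ) : ∀ γ ∈ R.Δ, f γ = g γ :=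
  (linearIndepOn_finset_iffₛ (v := id) (s := R.Δ)).1 R.Δ_indep f g h

theorem neg_notMem_pos_of_coeff_pos {β : V} {c : V → ℚ} (hβ : β = ∑ γ ∈ R.Δ, c γ • γ)
    {γ₀ : V} (hγ₀ : γ₀ ∈ R.Δ) (hc : 0 < c γ₀) : -β ∉ R.pos := by
  intro hneg
  obtain ⟨d, hd, hde⟩ := (R.mem_pos_iff _ (R.pos_sub hneg)).1 hneg
  have hsum : ∑ γ ∈ R.Δ, (-c γ) • γ = ∑ γ ∈ R.Δ, d γ • γ := by
    simp only [neg_smul, Finset.sum_neg_distrib, ← hβ, hde]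
  linarith [R.coeff_eq_of_sum_smul_eq hsum γ₀ hγ₀, hd γ₀]

theorem neg_notMem_pos {β : V} (hβ : β ∈ R.pos) : -β ∉ R.pos := by
  obtain ⟨c, hc, hce⟩ := (R.mem_pos_iff β (R.pos_sub hβ)).1 hβ
  have hβ0 : ∑ γ ∈ R.Δ, c γ • γ ≠ 0 := hce ▸ fun h => R.zero_notin (h ▸ R.pos_sub hβ)
  obtain ⟨γ, hγ, hcγ⟩ := Finset.exists_ne_zero_of_sum_ne_zero hβ0
  exact R.neg_notMem_pos_of_coeff_pos hce hγ ((hc γ).lt_of_ne' (left_ne_zero_of_smul hcγ))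

theorem mem_pos_of_mem_Δ {α : V} (hα : α ∈ R.Δ) : α ∈ R.pos := by
  classical
  refine (R.mem_pos_iff α (R.Δ_sub hα)).2 ⟨Pi.single α 1, fun γ => ?_, ?_⟩
  · by_cases h : γ = α <;> simp [h]
  · simp [Pi.single_apply, ite_smul, hα]

theorem sub_coroot_smul_mem_pos {α β : V} (hα : α ∈ R.Δ) (hβ : β ∈ R.pos) (hne : β ≠ α) :
    β - R.coroot α β • α ∈ R.pos := by
  classical
  obtain ⟨c, hc, hce⟩ := (R.mem_pos_iff β (R.pos_sub hβ)).1 hβ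
  obtain ⟨γ₀, hγ₀, hγ₀α, hcγ₀⟩ : ∃ γ ∈ R.Δ, γ ≠ α ∧ 0 < c γ := by
    by_contra! hzero
    have hβα : β = c α • α := by
      rw [hce, Finset.sum_eq_single α (fun γ hγ hγα => by
        rw [le_antisymm (hzero γ hγ hγα) (hc γ), zero_smul]) (absurd hα)]
    rcases R.reduced α (R.Δ_sub hα) (c α) (hβα ▸ R.pos_sub hβ) with h1 | h1
    · exact hne (by rw [hβα, h1, one_smul])
    · linarith [hc α]
  -- the reflection only changes the `α`-coordinate, so the positive `γ₀`-coordinate survives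
  have hexp : β - R.coroot α β • α
      = ∑ γ ∈ R.Δ, (c γ - if γ = α then R.coroot α β else 0) • γ := by
    simp [sub_smul, Finset.sum_sub_distrib, ite_smul, hα, ← hce]
  exact (R.pos_or_neg _ (R.reflect_root α (R.Δ_sub hα) β (R.pos_sub hβ))).resolve_right
    (R.neg_notMem_pos_of_coeff_pos hexp hγ₀ (by simpa [hγ₀α] using hcγ₀))

theorem reflection_mem_pos_erase [DecidableEq V] {α β : V} (hα : α ∈ R.Δ)
    (hβ : β ∈ R.pos.erase α) :
    Module.reflection (R.coroot_self α (R.Δ_sub hα)) β ∈ R.pos.erase α := by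
  obtain ⟨hβα, hβpos⟩ := Finset.mem_erase.1 hβ
  refine Finset.mem_erase.2 ⟨fun hsβ => ?_, ?_⟩
  · have hβneg : β = -α := by
      rw [← Module.involutive_reflection (R.coroot_self α (R.Δ_sub hα)) β, hsβ,
        Module.reflection_apply_self]
    exact R.neg_notMem_pos (R.mem_pos_of_mem_Δ hα) (hβneg ▸ hβpos)
  · rw [Module.reflection_apply]
    exact R.sub_coroot_smul_mem_pos hα hβpos hβα

theorem coroot_rho_of_mem_Δ {ρ : V} (hρ : (2:ℚ) • ρ = ∑ β ∈ R.pos, β) {α : V} (hα : α ∈ R.Δ) :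
    R.coroot α ρ = 1 := by
  classical
  have hα2 := R.coroot_self α (R.Δ_sub hα)
  set s := Module.reflection hα2
  have hαpos := R.mem_pos_of_mem_Δ hα
  have hα0 : α ≠ 0 := fun h => R.zero_notin (h ▸ R.Δ_sub hα)
  have hperm : ∑ β ∈ R.pos.erase α, s β = ∑ β ∈ R.pos.erase α, β :=
    Finset.sum_nbij' s s (fun _ => R.reflection_mem_pos_erase hα)
      (fun _ => R.reflection_mem_pos_erase hα) (fun β _ => Module.involutive_reflection hα2 β)
      (fun β _ => Module.involutive_reflection hα2 β) (fun _ _ => rfl)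
  -- `s` permutes `Φ⁺ \ {α}` and negates `α`, so it lowers `2ρ` by exactly `2α`
  have hs : s ((2:ℚ) • ρ) = (2:ℚ) • ρ - (2:ℚ) • α := by
    rw [hρ, map_sum, ← Finset.add_sum_erase _ _ hαpos, hperm, Module.reflection_apply_self,
      ← Finset.add_sum_erase _ _ hαpos]
    module
  rw [Module.reflection_apply, sub_right_inj] at hs
  have h2 : R.coroot α ((2:ℚ) • ρ) = 2 := smul_left_injective ℚ hα0 hs
  rw [map_smul, smul_eq_mul] at h2
  linarith

theorem exists_mem_Δ_one_le_coroot {β : V} (hβ : β ∈ R.pos) : ∃ γ ∈ R.Δ, 1 ≤ R.coroot β γ := by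
  have hβΦ := R.pos_sub hβ
  obtain ⟨c, hc, hce⟩ := (R.mem_pos_iff β hβΦ).1 hβ
  have hsum : 0 < ∑ γ ∈ R.Δ, c γ * R.coroot β γ := by
    have h2 := R.coroot_self β hβΦ
    nth_rewrite 2 [hce] at h2
    simp only [map_sum, map_smul, smul_eq_mul] at h2
    linarith
  obtain ⟨γ, hγ, hpos⟩ := Finset.exists_lt_of_sum_lt (f := fun _ => (0:ℚ)) (by simpa using hsum)
  refine ⟨γ, hγ, ?_⟩
  obtain ⟨n, hn⟩ := R.crystallographic β hβΦ γ (R.Δ_sub hγ)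
  have : (0:ℚ) < n := hn ▸ pos_of_mul_pos_right hpos (hc γ)
  rw [hn]
  exact_mod_cast (Int.cast_pos.1 this : 0 < n)

theorem one_le_coroot_rho {ρ : V} (hρ : (2:ℚ) • ρ = ∑ β ∈ R.pos, β) {β : V} (hβ : β ∈ R.pos) :
    1 ≤ R.coroot β ρ := by
  obtain ⟨β₀, hβ₀, hmin⟩ := R.pos.exists_min_image (fun b => R.coroot b ρ) ⟨β, hβ⟩
  refine le_trans ?_ (hmin β hβ)
  obtain ⟨γ, hγ, hγ1⟩ := R.exists_mem_Δ_one_le_coroot hβ₀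
  by_cases hβ₀γ : β₀ = γ
  · rw [hβ₀γ, R.coroot_rho_of_mem_Δ hρ hγ]
  -- otherwise reflecting `β₀` in `γ` gives a positive root with a smaller pairing against `ρ`
  have hlt := hmin _ (R.sub_coroot_smul_mem_pos hγ hβ₀ hβ₀γ)
  rw [R.reflect_coroot γ (R.Δ_sub hγ) β₀ (R.pos_sub hβ₀), map_sub, map_smul,
    R.coroot_rho_of_mem_Δ hρ hγ, one_smul] at hlt
  linarith

theorem W_le_stabilizer_Φ : R.W ≤ MulAction.stabilizer (V ≃ₗ[ℚ] V) (R.Φ : Set V) := by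
  rw [R.weyl_gen, Subgroup.closure_le]
  rintro _ ⟨α, hα, rfl⟩
  exact (Module.bijOn_reflection_of_mapsTo _ fun β hβ => R.reflect_root α hα β hβ).image_eq

theorem apply_mem_Φ {v : V ≃ₗ[ℚ] V} (hv : v ∈ R.W) {β : V} (hβ : β ∈ R.Φ) : v β ∈ R.Φ := by
  have h := Set.smul_mem_smul_set (a := v) (Finset.mem_coe.2 hβ)
  rwa [MulAction.mem_stabilizer_iff.1 (R.W_le_stabilizer_Φ hv)] at h

variable {R}

theorem IsDominant.apply_nonneg {μ : Module.Dual ℚ V} (hμ : R.IsDominant μ) {β : V}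
    (hβ : β ∈ R.pos) : 0 ≤ μ β := by
  obtain ⟨c, hc, hce⟩ := (R.mem_pos_iff β (R.pos_sub hβ)).1 hβ
  rw [hce, map_sum]
  exact Finset.sum_nonneg fun γ hγ => by
    rw [map_smul, smul_eq_mul]
    exact mul_nonneg (hc γ) (hμ γ hγ)

theorem IsDominant.apply_weyl_rho_le {ρ : V} (hρ : (2:ℚ) • ρ = ∑ β ∈ R.pos, β)
    {μ : Module.Dual ℚ V} (hμ : R.IsDominant μ) {v : V ≃ₗ[ℚ] V} (hv : v ∈ R.W) :
    μ (v ρ) ≤ μ ρ := by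
  classical
  set f : V → V := fun β => if v β ∈ R.pos then v β else -v β
  have hf_mem : ∀ β ∈ R.pos, f β ∈ R.pos := fun β hβ => by
    by_cases h : v β ∈ R.pos
    · simp [f, h]
    · simpa [f, h] using (R.pos_or_neg _ (R.apply_mem_Φ hv (R.pos_sub hβ))).resolve_left h
  have hf_ge : ∀ β ∈ R.pos, μ (v β) ≤ μ (f β) := fun β hβ => by
    by_cases h : v β ∈ R.pos
    · simp [f, h]
    · have := hμ.apply_nonneg (hf_mem β hβ)
      simp only [f, h, if_false, map_neg] at this ⊢
      linarith
  have hne_neg : ∀ β ∈ R.pos, ∀ β' ∈ R.pos, v β ≠ -v β' := fun β hβ β' hβ' h => by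
    rw [← map_neg] at h
    exact R.neg_notMem_pos hβ' (v.injective h ▸ hβ)
  have hf_inj : Set.InjOn f R.pos := fun β hβ β' hβ' h => by
    simp only [f] at h
    split_ifs at h
    · exact v.injective h
    · exact absurd h (hne_neg β hβ β' hβ')
    · exact absurd h.symm (hne_neg β' hβ' β hβ)
    · exact v.injective (neg_injective h)
  have htwice : ∀ x : V, μ ((2:ℚ) • x) = 2 * μ x := fun x => by rw [map_smul, smul_eq_mul]
  suffices 2 * μ (v ρ) ≤ 2 * μ ρ by linarith
  calc 2 * μ (v ρ) = ∑ β ∈ R.pos, μ (v β) := by rw [← htwice, ← map_smul, hρ, map_sum, map_sum]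
    _ ≤ ∑ β ∈ R.pos, μ (f β) := Finset.sum_le_sum hf_ge
    _ = ∑ γ ∈ R.pos.image f, μ γ := (Finset.sum_image hf_inj).symm
    _ ≤ ∑ γ ∈ R.pos, μ γ := Finset.sum_le_sum_of_subset_of_nonneg
          (Finset.image_subset_iff.2 hf_mem) fun γ hγ _ => hμ.apply_nonneg hγ
    _ = 2 * μ ρ := by rw [← htwice, hρ, map_sum]

end RootSystemData

theorem rho_pairing_ineq_general {V : Type} [AddCommGroup V] [Module ℚ V]
    [FiniteDimensional ℚ V] (R : RootSystemData V)
    (ΔM : Finset V) (hM : ΔM ⊆ R.Δ)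
    (ρ : V) (hρ : (2:ℚ) • ρ = ∑ β ∈ R.pos, β)
    (ν lam : Module.Dual ℚ V)
    (c : V → ℚ) (hc : ∀ α, 0 ≤ c α) (heq : lam - ν = ∑ α ∈ ΔM, c α • R.coroot α)
    (w : V ≃ₗ[ℚ] V) (hw : w ∈ R.W)
    (hwpos : ∀ α ∈ ΔM, ∃ β ∈ R.pos, RootSystemData.dAct w (R.coroot α) = R.coroot β)
    (lamdom : Module.Dual ℚ V) (hld : R.IsDominant lamdom)
    (horb : ∃ u ∈ R.W, RootSystemData.dAct u lam = lamdom) :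
    (lam - ν) ρ ≤ (lamdom - RootSystemData.dAct w ν) ρ := by
  obtain ⟨u, hu, rfl⟩ := horb
  have hpair (x : V) : (lam - ν) x = ∑ α ∈ ΔM, c α * R.coroot α x := by
    simp [heq]
  have hcoroot (α : V) (hα : α ∈ ΔM) : R.coroot α ρ ≤ R.coroot α (w.symm ρ) := by
    obtain ⟨β, hβ, hwα⟩ := hwpos α hα
    rw [R.coroot_rho_of_mem_Δ hρ (hM hα), ← RootSystemData.dAct_apply, hwα]
    exact R.one_le_coroot_rho hρ hβ
  have hlam : lam (w.symm ρ) ≤ RootSystemData.dAct u lam ρ := by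
    simpa using hld.apply_weyl_rho_le hρ (mul_mem hu (inv_mem hw))
  calc (lam - ν) ρ = ∑ α ∈ ΔM, c α * R.coroot α ρ := hpair ρ
    _ ≤ ∑ α ∈ ΔM, c α * R.coroot α (w.symm ρ) :=
      Finset.sum_le_sum fun α hα => mul_le_mul_of_nonneg_left (hcoroot α hα) (hc α)
    _ = lam (w.symm ρ) - RootSystemData.dAct w ν ρ := (hpair _).symm
    _ ≤ (RootSystemData.dAct u lam - RootSystemData.dAct w ν) ρ := sub_le_sub_right hlam _

/-- Inequality chain from the end of the proof of Theorem 7.13: let `Δ_M ⊆ Δ`, let `ρ`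
be half the sum of the positive roots, let `λ − ν` be a non-negative rational linear
combination of `{α∨ : α ∈ Δ_M}`, and let `w ∈ W` be such that `w(α∨)` is a positive
coroot for every `α ∈ Δ_M` and `w(ν)` is dominant. Then
`⟨ρ, λ − ν⟩ ≤ ⟨ρ, λ_dom − w(ν)⟩`, where `λ_dom` is the dominant element in the Weyl
group orbit of `λ`. -/
theorem rho_pairing_ineq {V : Type} [AddCommGroup V] [Module ℚ V]
    [FiniteDimensional ℚ V] (R : RootSystemData V)
    (ΔM : Finset V) (hM : ΔM ⊆ R.Δ)
    (ρ : V) (hρ : (2:ℚ) • ρ = ∑ β ∈ R.pos, β)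
    (ν lam : Module.Dual ℚ V)
    (c : V → ℚ) (hc : ∀ α, 0 ≤ c α) (heq : lam - ν = ∑ α ∈ ΔM, c α • R.coroot α)
    (w : V ≃ₗ[ℚ] V) (hw : w ∈ R.W)
    (hwpos : ∀ α ∈ ΔM, ∃ β ∈ R.pos, RootSystemData.dAct w (R.coroot α) = R.coroot β)
    (hwdom : R.IsDominant (RootSystemData.dAct w ν))
    (lamdom : Module.Dual ℚ V) (hld : R.IsDominant lamdom)
    (horb : ∃ u ∈ R.W, RootSystemData.dAct u lam = lamdom) :
    (lam - ν) ρ ≤ (lamdom - RootSystemData.dAct w ν) ρ :=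
  rho_pairing_ineq_general R ΔM hM ρ hρ ν lam c hc heq w hw hwpos lamdom hld horb
end

section
/- Let a ≥ 0 be an integer and let A ∈ GLₙ(L) with v(det A) = 0. Then every entry of A has t-adic valuation ≥ −a if and only if there exists a dominant μ' ∈ ℤⁿ with μ' ≤ ((n−1)a, −a, −a, …, −a) such that A ∈ K·D(μ')·K. (Claim in the proof of the proposition that S_λ is the colimit of the S_{λ,η}: for μ = ((n−1)a, −a, …, −a), an element lies in Gr_{GLₙ, ≤μ} if and only if all entries of a representing matrix have valuation ≥ −a.) -/
noncomputable section

/-- The subring `R = k⟦t⟧` of the field of Laurent series `L = k((t))`, i.e. the image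
of the power series ring. -/
def Rsub (k : Type) [Field k] : Subring (LaurentSeries k) :=
  (HahnSeries.ofPowerSeries ℤ k).range

/-- The element `t ∈ k((t))`. -/
def tL (k : Type) [Field k] : LaurentSeries k := HahnSeries.single (1 : ℤ) 1

/-- The diagonal matrix `D(λ) = diag(t^{λ₁}, …, t^{λₙ}) ∈ GLₙ(k((t)))`. -/
def Dmat (k : Type) [Field k] (n : ℕ) (lam : Fin n → ℤ) :
    Matrix (Fin n) (Fin n) (LaurentSeries k) :=
  Matrix.diagonal fun i => (tL k) ^ (lam i)

/-- `K = GLₙ(k⟦t⟧) ⊆ GLₙ(k((t)))`: matrices with entries in `k⟦t⟧` admitting a (two-sided)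
inverse with entries in `k⟦t⟧`. -/
def Kset (k : Type) [Field k] (n : ℕ) : Set (Matrix (Fin n) (Fin n) (LaurentSeries k)) :=
  {A | ∃ B : Matrix (Fin n) (Fin n) (LaurentSeries k),
    (∀ i j, A i j ∈ Rsub k) ∧ (∀ i j, B i j ∈ Rsub k) ∧ A * B = 1 ∧ B * A = 1}

/-- `U(L)`: upper triangular matrices over `k((t))` with all diagonal entries equal to 1. -/
def Uset (k : Type) [Field k] (n : ℕ) : Set (Matrix (Fin n) (Fin n) (LaurentSeries k)) :=
  {u | (∀ i, u i i = 1) ∧ ∀ i j : Fin n, j < i → u i j = 0}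

/-- A tuple `μ ∈ ℤⁿ` is dominant if `μ₁ ≥ μ₂ ≥ ⋯ ≥ μₙ`. -/
def DominantT {n : ℕ} (μ : Fin n → ℤ) : Prop := ∀ i j : Fin n, i ≤ j → μ j ≤ μ i

/-- The dominance order on `ℤⁿ`: `λ ≤ μ` iff all proper partial sums of `λ` are at most
those of `μ` and the total sums agree. -/
def leT {n : ℕ} (lam μ : Fin n → ℤ) : Prop :=
  (∀ j : Fin n, ∑ i ∈ Finset.univ.filter (· ≤ j), lam i ≤
    ∑ i ∈ Finset.univ.filter (· ≤ j), μ i) ∧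
  ∑ i, lam i = ∑ i, μ i

/-! Rescaling by `t^a` turns the entry condition into integrality of `M = t^a A`. Over the
discrete valuation ring `k⟦t⟧`, the Smith normal form writes an integral `M` with `det M ≠ 0` as
`k₁ · diag(t^{ν₁}, …, t^{νₙ}) · k₂` with `k₁, k₂ ∈ K` and `ν ≥ 0`; hence `A ∈ K D(μ) K` with
`μ = ν − a`, so `μᵢ ≥ −a`, and `∑ μᵢ = v(det A) = 0`. After sorting `μ` these two conditions say
exactly that `μ` is dominant and `μ ≤ ((n−1)a, −a, …, −a)`: a proper partial sum of `μ` is minus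
the sum of the remaining entries, each `≥ −a`, and for dominant `μ` the last partial sum
inequality forces `μₙ ≥ −a`. In the other direction, all `μᵢ ≥ −a` makes
`t^a A ∈ K D(μ + a) K` integral. -/

theorem Finset.prod_zpow_eq_zpow_sum {ι G₀ : Type*} [CommGroupWithZero G₀] {a : G₀} (ha : a ≠ 0)
    (s : Finset ι) (f : ι → ℤ) : ∏ i ∈ s, a ^ f i = a ^ ∑ i ∈ s, f i := by
  induction s using Finset.cons_induction with
  | empty => simp
  | cons i s hi ih => rw [prod_cons, sum_cons, ih, zpow_add₀ ha]

section SmithNormalForm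

open Matrix

variable {R ι : Type*} [CommRing R] [IsDomain R] [Fintype ι] [DecidableEq ι]

theorem Matrix.exists_isUnit_mul_diagonal_mul_isUnit [IsPrincipalIdealRing R]
    (B : Matrix ι ι R) (hB : B.det ≠ 0) :
    ∃ (P Q : Matrix ι ι R) (d : ι → R), IsUnit P ∧ IsUnit Q ∧ B = P * diagonal d * Q := by
  have hinj : Function.Injective (toLin' B) := by
    rw [← LinearMap.ker_eq_bot, LinearMap.ker_eq_bot']
    by_contra! ⟨v, hv, hv0⟩
    exact hB (exists_mulVec_eq_zero_iff.mp ⟨v, hv0, hv⟩)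
  let e := LinearEquiv.ofInjective _ hinj
  obtain ⟨b, d, c, hc⟩ :=
    Submodule.exists_smith_normal_form_of_rank_eq (Pi.basisFun R ι) e.finrank_eq.symm
  let c' := c.map e.symm
  have hdiag : LinearMap.toMatrix c' b (toLin' B) = diagonal d := by
    ext i j
    have : toLin' B (c' j) = d j • b j := by
      rw [← hc]; exact congrArg Subtype.val (e.apply_symm_apply (c j))
    rw [LinearMap.toMatrix_apply, this, map_smul, Module.Basis.repr_self, diagonal_apply,
      Finsupp.smul_apply, Finsupp.single_apply, smul_eq_mul]
    by_cases h : i = j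
    · subst h; simp
    · simp [h, Ne.symm h]
  refine ⟨(Pi.basisFun R ι).toMatrix b, c'.toMatrix (Pi.basisFun R ι), d,
    @isUnit_of_invertible _ _ _ (Module.Basis.invertibleToMatrix _ _),
    @isUnit_of_invertible _ _ _ (Module.Basis.invertibleToMatrix _ _), ?_⟩
  rw [← hdiag, basis_toMatrix_mul_linearMap_toMatrix_mul_basis_toMatrix,
    LinearMap.toMatrix_eq_toMatrix', LinearMap.toMatrix'_toLin']

theorem Matrix.exists_isUnit_mul_diagonal_pow_mul_isUnit [IsDiscreteValuationRing R]
    {ϖ : R} (hϖ : Irreducible ϖ) (B : Matrix ι ι R) (hB : B.det ≠ 0) :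
    ∃ (P Q : Matrix ι ι R) (ν : ι → ℕ), IsUnit P ∧ IsUnit Q ∧
      B = P * diagonal (fun i => ϖ ^ ν i) * Q := by
  obtain ⟨P, Q, d, hP, hQ, rfl⟩ := exists_isUnit_mul_diagonal_mul_isUnit B hB
  have hd : ∀ i, d i ≠ 0 := fun i hi => hB <| by
    rw [det_mul, det_mul, det_diagonal, Finset.prod_eq_zero (Finset.mem_univ i) hi, mul_zero,
      zero_mul]
  choose ν u hu using fun i => IsDiscreteValuationRing.eq_unit_mul_pow_irreducible (hd i) hϖ
  refine ⟨P * diagonal (fun i => (u i : R)), Q, ν, hP.mul ?_, hQ, ?_⟩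
  · exact isUnit_diagonal.mpr (Pi.isUnit_iff.mpr fun i => (u i).isUnit)
  · rw [mul_assoc P (diagonal _) (diagonal _), diagonal_mul_diagonal, ← funext hu]

end SmithNormalForm

section LaurentSeries

open HahnSeries PowerSeries Matrix

variable {k : Type} [Field k]

theorem tL_zpow (m : ℤ) : tL k ^ m = single m 1 :=
  (RatFunc.single_zpow m).symm

theorem tL_ne_zero : tL k ≠ 0 :=
  single_ne_zero one_ne_zero

theorem tL_zpow_ne_zero (m : ℤ) : tL k ^ m ≠ 0 :=
  zpow_ne_zero m tL_ne_zero

theorem order_tL_zpow (m : ℤ) : (tL k ^ m).order = m := by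
  rw [tL_zpow]; exact order_single one_ne_zero

theorem ofPowerSeries_X_pow_eq_tL_zpow (ν : ℕ) :
    ofPowerSeries ℤ k (X ^ ν) = tL k ^ (ν : ℤ) := by
  rw [ofPowerSeries_X_pow, tL_zpow]

theorem tL_zpow_mem_Rsub {m : ℤ} (hm : 0 ≤ m) : tL k ^ m ∈ Rsub k := by
  lift m to ℕ using hm
  exact ⟨X ^ m, ofPowerSeries_X_pow_eq_tL_zpow m⟩

theorem order_nonneg_of_mem_Rsub {x : LaurentSeries k} (hx : x ∈ Rsub k) : 0 ≤ x.order := by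
  obtain ⟨f, rfl⟩ := hx
  by_cases hf : ofPowerSeries ℤ k f = 0
  · rw [hf, HahnSeries.order_zero]
  by_contra! hneg
  have := PowerSeries.coeff_coe f (ofPowerSeries ℤ k f).order
  rw [if_pos hneg] at this
  exact hf (coeff_order_eq_zero.mp this)

theorem order_eq_zero_of_mul_eq_one {x y : LaurentSeries k} (hx : x ∈ Rsub k) (hy : y ∈ Rsub k)
    (hxy : x * y = 1) : x.order = 0 := by
  have h := order_mul (left_ne_zero_of_mul_eq_one hxy) (right_ne_zero_of_mul_eq_one hxy)
  rw [hxy, HahnSeries.order_one] at h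
  linarith [order_nonneg_of_mem_Rsub hx, order_nonneg_of_mem_Rsub hy]

variable {n : ℕ}

theorem mul_apply_mem_Rsub {x y : Matrix (Fin n) (Fin n) (LaurentSeries k)}
    (hx : ∀ i j, x i j ∈ Rsub k) (hy : ∀ i j, y i j ∈ Rsub k) (i j : Fin n) :
    (x * y) i j ∈ Rsub k := by
  rw [mul_apply]
  exact Subring.sum_mem _ fun l _ => mul_mem (hx i l) (hy l j)

theorem det_mem_Rsub {x : Matrix (Fin n) (Fin n) (LaurentSeries k)}
    (hx : ∀ i j, x i j ∈ Rsub k) : x.det ∈ Rsub k := by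
  rw [det_apply]
  exact Subring.sum_mem _ fun σ _ => zsmul_mem (Subring.prod_mem _ fun i _ => hx (σ i) i) _

theorem mul_mem_Kset {x y : Matrix (Fin n) (Fin n) (LaurentSeries k)}
    (hx : x ∈ Kset k n) (hy : y ∈ Kset k n) : x * y ∈ Kset k n := by
  obtain ⟨x', hx, hx', hxx', hx'x⟩ := hx
  obtain ⟨y', hy, hy', hyy', hy'y⟩ := hy
  refine ⟨y' * x', mul_apply_mem_Rsub hx hy, mul_apply_mem_Rsub hy' hx', ?_, ?_⟩
  · rw [mul_assoc, ← mul_assoc y, hyy', one_mul, hxx']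
  · rw [mul_assoc, ← mul_assoc x', hx'x, one_mul, hy'y]

theorem map_ofPowerSeries_mem_Kset {P : Matrix (Fin n) (Fin n) k⟦X⟧} (hP : IsUnit P) :
    P.map (ofPowerSeries ℤ k) ∈ Kset k n := by
  obtain ⟨u, rfl⟩ := hP
  refine ⟨(↑u⁻¹ : Matrix (Fin n) (Fin n) k⟦X⟧).map (ofPowerSeries ℤ k),
    fun i j => ⟨_, rfl⟩, fun i j => ⟨_, rfl⟩, ?_, ?_⟩ <;>
  rw [← Matrix.map_mul] <;> simp

theorem permMatrix_mem_Kset (σ : Equiv.Perm (Fin n)) :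
    σ.permMatrix (LaurentSeries k) ∈ Kset k n := by
  have hperm : ∀ τ : Equiv.Perm (Fin n), ∀ i j, τ.permMatrix (LaurentSeries k) i j ∈ Rsub k := by
    intro τ i j
    rw [Equiv.Perm.permMatrix, PEquiv.toMatrix_apply]
    split_ifs
    exacts [one_mem _, zero_mem _]
  refine ⟨σ⁻¹.permMatrix _, hperm σ, hperm σ⁻¹, ?_, ?_⟩ <;>
  rw [← permMatrix_mul] <;> simp

theorem det_ne_zero_of_mem_Kset {x : Matrix (Fin n) (Fin n) (LaurentSeries k)}
    (hx : x ∈ Kset k n) : x.det ≠ 0 := by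
  obtain ⟨y, -, -, hxy, -⟩ := hx
  exact left_ne_zero_of_mul_eq_one (by rw [← det_mul, hxy, det_one] : x.det * y.det = 1)

theorem order_det_of_mem_Kset {x : Matrix (Fin n) (Fin n) (LaurentSeries k)}
    (hx : x ∈ Kset k n) : x.det.order = 0 := by
  obtain ⟨y, hx, hy, hxy, -⟩ := hx
  exact order_eq_zero_of_mul_eq_one (det_mem_Rsub hx) (det_mem_Rsub hy)
    (by rw [← det_mul, hxy, det_one])

end LaurentSeries

section CartanCell

open HahnSeries PowerSeries Matrix

variable {k : Type} [Field k] {n : ℕ}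

def cartanCell (k : Type) [Field k] (n : ℕ) (μ : Fin n → ℤ) :
    Set (Matrix (Fin n) (Fin n) (LaurentSeries k)) :=
  {A | ∃ k₁ ∈ Kset k n, ∃ k₂ ∈ Kset k n, A = k₁ * Dmat k n μ * k₂}

theorem Dmat_eq_permMatrix_mul_Dmat_comp_mul (μ : Fin n → ℤ) (σ : Equiv.Perm (Fin n)) :
    Dmat k n μ = σ⁻¹.permMatrix _ * Dmat k n (μ ∘ σ) * σ.permMatrix _ := by
  rw [Equiv.Perm.permMatrix, Equiv.Perm.permMatrix, PEquiv.toMatrix_toPEquiv_mul,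
    PEquiv.mul_toMatrix_toPEquiv, Dmat, Dmat, submatrix_submatrix]
  ext i j
  simp [diagonal_apply]

theorem mem_cartanCell_comp_perm {μ : Fin n → ℤ} {A : Matrix (Fin n) (Fin n) (LaurentSeries k)}
    (hA : A ∈ cartanCell k n μ) (σ : Equiv.Perm (Fin n)) : A ∈ cartanCell k n (μ ∘ σ) := by
  obtain ⟨k₁, hk₁, k₂, hk₂, rfl⟩ := hA
  refine ⟨k₁ * σ⁻¹.permMatrix _, mul_mem_Kset hk₁ (permMatrix_mem_Kset _),
    σ.permMatrix _ * k₂, mul_mem_Kset (permMatrix_mem_Kset _) hk₂, ?_⟩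
  rw [Dmat_eq_permMatrix_mul_Dmat_comp_mul μ σ]
  simp only [Matrix.mul_assoc]

theorem tL_zpow_smul_Dmat (m : ℤ) (μ : Fin n → ℤ) :
    tL k ^ m • Dmat k n μ = Dmat k n (fun i => μ i + m) := by
  rw [Dmat, Dmat, ← diagonal_smul]
  congr 1
  ext i
  rw [Pi.smul_apply, smul_eq_mul, ← zpow_add₀ tL_ne_zero, add_comm]

theorem tL_zpow_smul_mem_cartanCell {μ : Fin n → ℤ} {A : Matrix (Fin n) (Fin n) (LaurentSeries k)}
    (hA : A ∈ cartanCell k n μ) (m : ℤ) : tL k ^ m • A ∈ cartanCell k n (fun i => μ i + m) := by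
  obtain ⟨k₁, hk₁, k₂, hk₂, rfl⟩ := hA
  refine ⟨k₁, hk₁, k₂, hk₂, ?_⟩
  rw [← tL_zpow_smul_Dmat, Matrix.mul_smul, Matrix.smul_mul]

theorem order_det_of_mem_cartanCell {μ : Fin n → ℤ} {A : Matrix (Fin n) (Fin n) (LaurentSeries k)}
    (hA : A ∈ cartanCell k n μ) : A.det.order = ∑ i, μ i := by
  obtain ⟨k₁, hk₁, k₂, hk₂, rfl⟩ := hA
  have hD : (Dmat k n μ).det = tL k ^ ∑ i, μ i := by
    rw [Dmat, det_diagonal, Finset.prod_zpow_eq_zpow_sum tL_ne_zero]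
  have hk₁D : k₁.det * (Dmat k n μ).det ≠ 0 :=
    mul_ne_zero (det_ne_zero_of_mem_Kset hk₁) (hD ▸ tL_zpow_ne_zero _)
  rw [det_mul, det_mul, order_mul hk₁D (det_ne_zero_of_mem_Kset hk₂),
    order_mul (det_ne_zero_of_mem_Kset hk₁) (hD ▸ tL_zpow_ne_zero _), hD,
    order_det_of_mem_Kset hk₁, order_det_of_mem_Kset hk₂, order_tL_zpow, zero_add, add_zero]

theorem apply_mem_Rsub_of_mem_cartanCell {μ : Fin n → ℤ}
    {A : Matrix (Fin n) (Fin n) (LaurentSeries k)} (hA : A ∈ cartanCell k n μ)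
    (hμ : ∀ i, 0 ≤ μ i) (i j : Fin n) : A i j ∈ Rsub k := by
  obtain ⟨k₁, ⟨-, hk₁, -⟩, k₂, ⟨-, hk₂, -⟩, rfl⟩ := hA
  refine mul_apply_mem_Rsub (mul_apply_mem_Rsub hk₁ fun i j => ?_) hk₂ i j
  rw [Dmat, diagonal_apply]
  split_ifs
  exacts [tL_zpow_mem_Rsub (hμ i), zero_mem _]

theorem exists_mem_cartanCell_of_apply_mem_Rsub {M : Matrix (Fin n) (Fin n) (LaurentSeries k)}
    (hM : ∀ i j, M i j ∈ Rsub k) (hdet : M.det ≠ 0) :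
    ∃ ν : Fin n → ℕ, M ∈ cartanCell k n (fun i => ν i) := by
  obtain ⟨B, hBM⟩ : ∃ B : Matrix (Fin n) (Fin n) k⟦X⟧, B.map (ofPowerSeries ℤ k) = M :=
    ⟨of fun i j => (hM i j).choose, ext fun i j => (hM i j).choose_spec⟩
  have hBdet : B.det ≠ 0 := by
    rintro h
    apply hdet
    rw [← hBM, ← RingHom.mapMatrix_apply, ← RingHom.map_det, h, map_zero]
  obtain ⟨P, Q, ν, hP, hQ, rfl⟩ :=
    exists_isUnit_mul_diagonal_pow_mul_isUnit X_irreducible B hBdet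
  refine ⟨ν, _, map_ofPowerSeries_mem_Kset hP, _, map_ofPowerSeries_mem_Kset hQ, ?_⟩
  rw [← hBM, Matrix.map_mul, Matrix.map_mul, diagonal_map (map_zero _), Dmat]
  simp only [ofPowerSeries_X_pow_eq_tL_zpow]

end CartanCell

section Coweights

open Finset

variable {n : ℕ}

def boundCoweight (n a : ℕ) : Fin n → ℤ :=
  fun i => if (i : ℕ) = 0 then ((n : ℤ) - 1) * a else -(a : ℤ)

theorem sum_filter_le_boundCoweight (a : ℕ) (j : Fin n) :
    ∑ i ∈ univ.filter (· ≤ j), boundCoweight n a i = ((n : ℤ) - 1 - j) * a := by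
  obtain _ | m := n
  · exact j.elim0
  have h0 : (0 : Fin (m + 1)) ∈ Iic j := mem_Iic.mpr (Fin.zero_le j)
  have hrest : ∀ i ∈ (Iic j).erase 0, boundCoweight (m + 1) a i = -(a : ℤ) := fun i hi =>
    if_neg (Fin.val_ne_iff.mpr (ne_of_mem_erase hi))
  rw [show univ.filter (· ≤ j) = Iic j by ext; simp, ← add_sum_erase _ _ h0,
    sum_congr rfl hrest, sum_const, card_erase_of_mem h0, Fin.card_Iic]
  simp only [boundCoweight, Fin.val_zero, if_true, nsmul_eq_mul]
  push_cast
  ring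

theorem sum_boundCoweight (a : ℕ) : ∑ i, boundCoweight n a i = 0 := by
  obtain _ | m := n
  · simp
  have h := sum_filter_le_boundCoweight a (Fin.last m)
  rw [filter_true_of_mem fun i _ => Fin.le_last i, Fin.val_last] at h
  rw [h]
  push_cast
  ring

theorem leT_boundCoweight {a : ℕ} {μ : Fin n → ℤ} (hμ : ∀ i, -(a : ℤ) ≤ μ i)
    (hsum : ∑ i, μ i = 0) : leT μ (boundCoweight n a) := by
  refine ⟨fun j => ?_, hsum.trans (sum_boundCoweight a).symm⟩
  have hsplit := sum_filter_add_sum_filter_not univ (· ≤ j) μ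
  have hcard : #(univ.filter fun i => ¬i ≤ j) = n - 1 - j := by
    rw [← Fin.card_Ioi]; congr 1; ext; simp
  have hlow := card_nsmul_le_sum (univ.filter fun i => ¬i ≤ j) μ (-(a : ℤ)) fun i _ => hμ i
  rw [hcard, nsmul_eq_mul, Nat.cast_sub (by omega), Nat.cast_sub (by omega)] at hlow
  rw [sum_filter_le_boundCoweight]
  push_cast at hlow
  linarith

theorem neg_le_of_leT_boundCoweight {a : ℕ} {μ : Fin n → ℤ} (hdom : DominantT μ)
    (hle : leT μ (boundCoweight n a)) (i : Fin n) : -(a : ℤ) ≤ μ i := by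
  obtain _ | m := n
  · exact i.elim0
  refine le_trans ?_ (hdom i (Fin.last m) (Fin.le_last i))
  have htot : ∑ i, μ i = 0 := hle.2.trans (sum_boundCoweight a)
  obtain _ | m := m
  · rw [Fin.sum_univ_one] at htot
    exact htot ▸ neg_nonpos.mpr (Nat.cast_nonneg a)
  have hpartial := hle.1 (Fin.last m).castSucc
  have hlast : univ.filter (fun i => ¬i ≤ (Fin.last m).castSucc) = {Fin.last (m + 1)} := by
    ext i
    simp [Fin.le_castSucc_iff, Fin.lt_last_iff_ne_last]
  have hsplit := sum_filter_add_sum_filter_not univ (· ≤ (Fin.last m).castSucc) μ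
  rw [hlast, sum_singleton, htot] at hsplit
  rw [sum_filter_le_boundCoweight] at hpartial
  simp only [Fin.val_castSucc, Fin.val_last] at hpartial
  push_cast at hpartial
  linarith

theorem exists_perm_dominantT (μ : Fin n → ℤ) : ∃ σ : Equiv.Perm (Fin n), DominantT (μ ∘ σ) :=
  ⟨Tuple.sort (-μ), fun _ _ hij => neg_le_neg_iff.mp (Tuple.monotone_sort (-μ) hij)⟩

end Coweights

/-- Claim from the proof that `S_λ = colim S_{λ,η}`: let `a ≥ 0` and let
`A ∈ GLₙ(k((t)))` with `v(det A) = 0`. Then all entries of `A` have `t`-adic valuation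
`≥ −a` if and only if `A ∈ K·D(μ')·K` for some dominant `μ' ≤ ((n−1)a, −a, …, −a)`. -/
theorem entries_valuation_iff_cartan_le {k : Type} [Field k] (n : ℕ) (a : ℕ)
    (A : Matrix (Fin n) (Fin n) (LaurentSeries k)) (hA : IsUnit A)
    (hdet : A.det.order = 0) :
    (∀ i j, (tL k) ^ (a : ℤ) * A i j ∈ Rsub k) ↔
      ∃ μ' : Fin n → ℤ, DominantT μ' ∧
        leT μ' (fun i => if (i : ℕ) = 0 then ((n : ℤ) - 1) * a else -(a : ℤ)) ∧
        ∃ k₁ ∈ Kset k n, ∃ k₂ ∈ Kset k n, A = k₁ * Dmat k n μ' * k₂ := by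
  have hdetA : A.det ≠ 0 := ((Matrix.isUnit_iff_isUnit_det A).mp hA).ne_zero
  constructor
  · intro hint
    obtain ⟨ν, hν⟩ := exists_mem_cartanCell_of_apply_mem_Rsub (M := tL k ^ (a : ℤ) • A) hint
      (by rw [Matrix.det_smul]; exact mul_ne_zero (pow_ne_zero _ (tL_zpow_ne_zero _)) hdetA)
    have hcell := tL_zpow_smul_mem_cartanCell hν (-a)
    rw [smul_smul, ← zpow_add₀ tL_ne_zero, neg_add_cancel, zpow_zero, one_smul] at hcell
    obtain ⟨σ, hσ⟩ := exists_perm_dominantT fun i => (ν i : ℤ) + -(a : ℤ)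
    have hcellσ := mem_cartanCell_comp_perm hcell σ
    refine ⟨_, hσ, leT_boundCoweight (fun i => by simp) ?_, hcellσ⟩
    rw [← order_det_of_mem_cartanCell hcellσ, hdet]
  · rintro ⟨μ, hdom, hle, hcell⟩ i j
    have hμ i : 0 ≤ μ i + a := by linarith [neg_le_of_leT_boundCoweight hdom hle i]
    simpa using apply_mem_Rsub_of_mem_cartanCell (tL_zpow_smul_mem_cartanCell hcell a) hμ i j
end
end
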